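/- Let y : ℝ → ℝ be smooth and satisfy y^{(m)}(x) = ∑_{p=1}^{m} b_p(x)·y^{(m−p)}(x) for all x ∈ ℝ. Then for every natural number n and every x ∈ ℝ, y^{(m+n)}(x) = ∑_{p=1}^{m} α_p(n)(x)·y^{(m−p)}(x). -/

import Mathlib

/-!
Differentiate `y⁽ᵐ⁺ⁿ⁾ = ∑ α_p(n)·y⁽ᵐ⁻ᵖ⁾` once more. The product rule gives
`∑ α_p(n)′·y⁽ᵐ⁻ᵖ⁾ + ∑ α_p(n)·y⁽ᵐ⁻ᵖ⁺¹⁾`; in the second sum the `p = 1` term involves `y⁽ᵐ⁾`,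
which the equation rewrites as `∑ b_p·y⁽ᵐ⁻ᵖ⁾`, while the remaining terms are the same sum with
the index shifted by one. Collecting the coefficient of each `y⁽ᵐ⁻ᵖ⁾` gives exactly `α_p(n+1)`.
-/

/-- The `n`-image coefficients `α_p(n)` (for `1 ≤ p ≤ m`) of the linear ODE
`y⁽ᵐ⁾ = ∑_{p=1}^m b_p·y⁽ᵐ⁻ᵖ⁾`:
`α_p(0) = b_p`, `α_p(n+1) = (α_p(n))′ + α_{p+1}(n) + α₁(n)·b_p` for `1 ≤ p ≤ m−1`, and
`α_m(n+1) = (α_m(n))′ + α₁(n)·b_m`. -/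
noncomputable def alphaCoeff (m : ℕ) (b : ℕ → ℝ → ℝ) : ℕ → ℕ → ℝ → ℝ
  | 0, p => b p
  | n + 1, p => fun x =>
      deriv (alphaCoeff m b n p) x + (if p < m then alphaCoeff m b n (p + 1) x else 0)
        + alphaCoeff m b n 1 x * b p x

open Finset

theorem Finset.sum_Icc_one_succ {M : Type*} [AddCommMonoid M] (f : ℕ → M) (k : ℕ) :
    ∑ p ∈ Icc 1 (k + 1), f p = f 1 + ∑ p ∈ Icc 1 k, f (p + 1) := by
  induction k with
  | zero => simp
  | succ k ih => rw [sum_Icc_succ_top (by omega), ih, sum_Icc_succ_top (by omega), add_assoc]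

theorem sum_Icc_mul_sub_add_one {R : Type*} [Semiring R] {m : ℕ} (hm : 1 ≤ m) (c v : ℕ → R) :
    ∑ p ∈ Icc 1 m, c p * v (m - p + 1)
      = c 1 * v m + ∑ p ∈ Icc 1 m, (if p < m then c (p + 1) else 0) * v (m - p) := by
  obtain ⟨k, rfl⟩ : ∃ k, m = k + 1 := ⟨m - 1, by omega⟩
  rw [sum_Icc_one_succ, sum_Icc_succ_top (by omega), if_neg (lt_irrefl _), zero_mul, add_zero,
    Nat.add_sub_cancel]
  congr 1
  refine sum_congr rfl fun p hp => ?_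
  rw [mem_Icc] at hp
  rw [if_pos (by omega), show k + 1 - (p + 1) + 1 = k + 1 - p by omega]

section

variable {m : ℕ} {b : ℕ → ℝ → ℝ}

theorem contDiff_alphaCoeff (hb : ∀ p ∈ Icc 1 m, ContDiff ℝ (⊤ : ℕ∞) (b p)) (n : ℕ) :
    ∀ p ∈ Icc 1 m, ContDiff ℝ (⊤ : ℕ∞) (alphaCoeff m b n p) := by
  induction n with
  | zero => exact hb
  | succ n ih =>
    intro p hp
    have hp' := mem_Icc.mp hp
    have hderiv := (contDiff_infty_iff_deriv.mp (ih p hp)).2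
    have hshift : ContDiff ℝ (⊤ : ℕ∞)
        (fun x => if p < m then alphaCoeff m b n (p + 1) x else 0) := by
      split_ifs with h
      · exact ih (p + 1) (mem_Icc.mpr ⟨by omega, h⟩)
      · exact contDiff_const
    exact (hderiv.add hshift).add ((ih 1 (mem_Icc.mpr ⟨le_rfl, by omega⟩)).mul (hb p hp))

theorem deriv_sum_mul_iteratedDeriv_of_ode {y : ℝ → ℝ} (hm : 1 ≤ m) (hy : ContDiff ℝ m y)
    (hode : ∀ x : ℝ,
      iteratedDeriv m y x = ∑ p ∈ Icc 1 m, b p x * iteratedDeriv (m - p) y x)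
    (a : ℕ → ℝ → ℝ) (ha : ∀ p ∈ Icc 1 m, Differentiable ℝ (a p)) (x : ℝ) :
    deriv (fun x => ∑ p ∈ Icc 1 m, a p x * iteratedDeriv (m - p) y x) x
      = ∑ p ∈ Icc 1 m, (deriv (a p) x + (if p < m then a (p + 1) x else 0) + a 1 x * b p x)
          * iteratedDeriv (m - p) y x := by
  have hy' : ∀ p ∈ Icc 1 m, Differentiable ℝ (iteratedDeriv (m - p) y) := fun p hp =>
    hy.differentiable_iteratedDeriv _
      (Nat.cast_lt.mpr (Nat.sub_lt_self (mem_Icc.mp hp).1 (mem_Icc.mp hp).2))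
  have hprod : ∀ p ∈ Icc 1 m,
      deriv (fun x => a p x * iteratedDeriv (m - p) y x) x
        = deriv (a p) x * iteratedDeriv (m - p) y x
          + a p x * iteratedDeriv (m - p + 1) y x := fun p hp => by
    rw [deriv_fun_mul (ha p hp x) (hy' p hp x), ← iteratedDeriv_succ]
  rw [deriv_fun_sum (A := fun p x => a p x * iteratedDeriv (m - p) y x)
      fun p hp => (ha p hp x).mul (hy' p hp x), sum_congr rfl hprod,
    sum_add_distrib, sum_Icc_mul_sub_add_one hm (a · x) (iteratedDeriv · y x), hode, mul_sum]
  simp only [add_mul, sum_add_distrib, mul_assoc]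
  ring

end

/-- If a smooth `y` satisfies `y⁽ᵐ⁾ = ∑_{p=1}^m b_p·y⁽ᵐ⁻ᵖ⁾`, then for every `n` and `x`,
`y⁽ᵐ⁺ⁿ⁾(x) = ∑_{p=1}^m α_p(n)(x)·y⁽ᵐ⁻ᵖ⁾(x)`. -/
theorem statement15 (m : ℕ) (hm : 1 ≤ m) (b : ℕ → ℝ → ℝ)
    (hb : ∀ p ∈ Finset.Icc 1 m, ContDiff ℝ (⊤ : ℕ∞) (b p))
    (y : ℝ → ℝ) (hy : ContDiff ℝ (⊤ : ℕ∞) y)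
    (hode : ∀ x : ℝ,
      iteratedDeriv m y x = ∑ p ∈ Finset.Icc 1 m, b p x * iteratedDeriv (m - p) y x)
    (n : ℕ) (x : ℝ) :
    iteratedDeriv (m + n) y x
      = ∑ p ∈ Finset.Icc 1 m, alphaCoeff m b n p x * iteratedDeriv (m - p) y x := by
  induction n generalizing x with
  | zero => exact hode x
  | succ n ih =>
    rw [← add_assoc, iteratedDeriv_succ, funext ih,
      deriv_sum_mul_iteratedDeriv_of_ode hm (hy.of_le (by exact_mod_cast le_top)) hode _
        fun p hp => (contDiff_alphaCoeff hb n p hp).differentiable (by simp)]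
    rfl
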